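/- Let (σ,τ̄) be a persistence pair in the cone filtration pairing a base simplex σ with a cone simplex τ̄ = ω∗τ, with min σ = d > b = max τ (low R[τ̄] = σ). Let c = V[τ̄] ∩ (K̄ − K) + V[τ̄] ∩ K_{≥b} and z = ∂c. Then z is a cycle supported on K_{≥b} ∩ K_{≤d} = K[b,d] (so [z] ∈ H(K[b,d])), and both σ and τ have nonzero coefficients in z. -/
import Mathlib


open Finsupp
open scoped Classical

/-- A finite Δ-complex over a field `F`: each cell has a dimension, a boundary chain,
and an integer support interval `T(σ) = [tmin σ, tmax σ] ⊆ [0, n]`; whenever `σ` appears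
in `∂τ` one has `tmin σ < tmin τ < tmax τ < tmax σ`. -/
structure DeltaComplex (F : Type) [Field F] (n : ℤ) where
  Cell : Type
  deq : DecidableEq Cell
  fin : Fintype Cell
  dim : Cell → ℕ
  tmin : Cell → ℤ
  tmax : Cell → ℤ
  bdry : Cell → (Cell →₀ F)
  tmin_nonneg : ∀ σ, 0 ≤ tmin σ
  tmin_lt_tmax : ∀ σ, tmin σ < tmax σ
  tmax_le : ∀ σ, tmax σ ≤ n
  bdry_dim : ∀ τ σ, bdry τ σ ≠ 0 → dim σ + 1 = dim τ
  nest : ∀ τ σ, bdry τ σ ≠ 0 → tmin σ < tmin τ ∧ tmax τ < tmax σ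
  bdry_bdry : ∀ τ, ((bdry τ).sum fun σ a => a • bdry σ) = 0

attribute [instance] DeltaComplex.deq DeltaComplex.fin

variable {F : Type} [Field F] {n : ℤ}

/-- The boundary of a chain of `K`. -/
noncomputable def bd (K : DeltaComplex F n) (c : K.Cell →₀ F) : K.Cell →₀ F :=
  c.sum fun τ a => a • K.bdry τ

/-- A chain is supported on a set of cells. -/
def SuppOn {α β : Type} [Zero β] (c : α →₀ β) (S : α → Prop) : Prop :=
  ∀ x, c x ≠ 0 → S x

/-- Cells of the prism `K̂`: vertical cells `σ×{i}` and horizontal cells `σ×[i,i+1]`. -/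
inductive PCell (C : Type) where
  | vert : C → ℤ → PCell C
  | horiz : C → ℤ → PCell C
deriving DecidableEq

/-- Membership of a prism cell in the prism `K̂`. -/
def inPrism (K : DeltaComplex F n) : PCell K.Cell → Prop
  | .vert σ i => K.tmin σ ≤ i ∧ i ≤ K.tmax σ
  | .horiz σ i => K.tmin σ ≤ i ∧ i + 1 ≤ K.tmax σ

/-- Membership of a prism cell in the interlevel subcomplex `K̂_i^j` (cells `σ×T` with
`T ⊆ [i,j]`). -/
def inSub (K : DeltaComplex F n) (i j : ℤ) : PCell K.Cell → Prop
  | .vert σ t => (K.tmin σ ≤ t ∧ t ≤ K.tmax σ) ∧ i ≤ t ∧ t ≤ j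
  | .horiz σ t => (K.tmin σ ≤ t ∧ t + 1 ≤ K.tmax σ) ∧ i ≤ t ∧ t + 1 ≤ j

/-- The boundary of a single prism cell: `∂(τ×i) = (∂τ)×i` and
`∂(σ×[i,i+1]) = σ×(i+1) − σ×i − (∂σ)×[i,i+1]`. -/
noncomputable def pcellBd (K : DeltaComplex F n) : PCell K.Cell → (PCell K.Cell →₀ F)
  | .vert τ i => (K.bdry τ).sum fun σ a => Finsupp.single (PCell.vert σ i) a
  | .horiz σ i =>
      Finsupp.single (PCell.vert σ (i + 1)) 1 - Finsupp.single (PCell.vert σ i) 1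
        - (K.bdry σ).sum fun ρ a => Finsupp.single (PCell.horiz ρ i) a

/-- The boundary of a prism chain. -/
noncomputable def pbd (K : DeltaComplex F n) (c : PCell K.Cell →₀ F) : PCell K.Cell →₀ F :=
  c.sum fun x a => a • pcellBd K x

/-- `z` is a relative cycle of the pair of subcomplexes `(A, B)` of the prism. -/
def RelCycle (K : DeltaComplex F n) (A B : PCell K.Cell → Prop)
    (z : PCell K.Cell →₀ F) : Prop :=
  SuppOn z A ∧ SuppOn (pbd K z) B

/-- The homology class `[z] ∈ H(A,B)` lies in the image of the map
`H(A',B') → H(A,B)` induced by the inclusion of pairs `(A',B') ⊆ (A,B)`: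
there is a relative cycle `α` of `(A',B')` homologous to `z` within `(A,B)`. -/
def InImg (K : DeltaComplex F n) (A' B' A B : PCell K.Cell → Prop)
    (z : PCell K.Cell →₀ F) : Prop :=
  ∃ α β γ : PCell K.Cell →₀ F,
    RelCycle K A' B' α ∧ SuppOn β A ∧ SuppOn γ B ∧ z = α + pbd K β + γ

/-- The vertical prism chain `w × t`. -/
noncomputable def vchain (K : DeltaComplex F n) (w : K.Cell →₀ F) (t : ℤ) :
    PCell K.Cell →₀ F :=
  w.sum fun σ a => Finsupp.single (PCell.vert σ t) a

/-- A valid choice of times for Lift-Cycle: for every simplex `τ` of `z` with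
`T(τ) ∩ [b,d] ≠ ∅`, the chosen time satisfies `t τ ∈ T(τ) ∩ [b,d]`. -/
def ValidTimes (K : DeltaComplex F n) (z : K.Cell →₀ F) (b d : ℤ) (t : K.Cell → ℤ) : Prop :=
  ∀ τ, z τ ≠ 0 → K.tmin τ ≤ d → b ≤ K.tmax τ →
    K.tmin τ ≤ t τ ∧ t τ ≤ K.tmax τ ∧ b ≤ t τ ∧ t τ ≤ d

/-- The chain `ẑ` produced by `Lift-Cycle(z, (s,f), w₀)` with the choice of times `t`
(here `b = min s f`, `d = max s f`): the sum of the vertical cells `⟨τ,z⟩·(τ×t_τ)` over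
simplices `τ` of `z` with `T(τ) ∩ [b,d] ≠ ∅`, plus horizontal cells `σ×[k,k+1]`
(oriented from `s` to `f`) whose coefficient is the running sum
`⟨σ,w₀⟩ + Σ ⟨τ,z⟩·⟨σ,∂τ⟩` over the cofaces `τ` whose time `t_τ` has already been passed
when traversing from `s` to `f`. -/
noncomputable def liftCycle (K : DeltaComplex F n) (z : K.Cell →₀ F) (s f : ℤ)
    (w0 : K.Cell →₀ F) (t : K.Cell → ℤ) : PCell K.Cell →₀ F :=
  (∑ τ ∈ z.support.filter (fun τ => K.tmin τ ≤ max s f ∧ min s f ≤ K.tmax τ),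
      Finsupp.single (PCell.vert τ (t τ)) (z τ))
  + ∑ σ : K.Cell, ∑ k ∈ Finset.Icc (min s f) (max s f - 1),
      Finsupp.single (PCell.horiz σ k)
        ((if s ≤ f then (1 : F) else -1) *
          (w0 σ +
            ∑ τ ∈ z.support.filter (fun τ =>
                (K.tmin τ ≤ max s f ∧ min s f ≤ K.tmax τ) ∧
                  (if s ≤ f then t τ ≤ k else k + 1 ≤ t τ)),
              z τ * (K.bdry τ) σ))

/-- Cells of the cone `K̄ = ω ∗ K`: base simplices, the cone vertex `ω`,
and cone simplices `σ̄ = ω ∗ σ`. -/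
inductive CCell (C : Type) where
  | base : C → CCell C
  | omega : CCell C
  | cone : C → CCell C
deriving DecidableEq

/-- Boundary of a single cell of the cone `K̄`:
`∂σ` for base simplices, `0` for `ω`, and `∂(ω∗σ) = σ − ω∗∂σ` (minus `ω` when `σ` is a
vertex) for cone simplices. -/
noncomputable def ccellBd (K : DeltaComplex F n) : CCell K.Cell → (CCell K.Cell →₀ F)
  | .base σ => (K.bdry σ).sum fun ρ a => Finsupp.single (CCell.base ρ) a
  | .omega => 0
  | .cone σ =>
      Finsupp.single (CCell.base σ) 1
        - (K.bdry σ).sum (fun ρ a => Finsupp.single (CCell.cone ρ) a)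
        - (if K.dim σ = 0 then Finsupp.single CCell.omega 1 else 0)

/-- The boundary of a chain of the cone `K̄`. -/
noncomputable def cbd (K : DeltaComplex F n) (c : CCell K.Cell →₀ F) : CCell K.Cell →₀ F :=
  c.sum fun x a => a • ccellBd K x

/-- The restriction `c ∩ K` of a cone chain to the base simplices, as a chain in `K`. -/
noncomputable def basePart (K : DeltaComplex F n) (c : CCell K.Cell →₀ F) : K.Cell →₀ F :=
  c.sum fun x a =>
    match x with
    | .base σ => Finsupp.single σ a
    | .omega => 0
    | .cone _ => 0

/-- The restriction `c ∩ (K̄ − K)` of a cone chain to the cells not in the base. -/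
noncomputable def conePart (K : DeltaComplex F n) (c : CCell K.Cell →₀ F) :
    CCell K.Cell →₀ F :=
  c.sum fun x a =>
    match x with
    | .base _ => 0
    | .omega => Finsupp.single CCell.omega a
    | .cone ρ => Finsupp.single (CCell.cone ρ) a

/-- The order of the cells of `K̄` in the cone filtration: base simplices by increasing
`min σ`, then `ω`, then cone simplices by decreasing `max σ`, ties broken consistently
so that every prefix is a subcomplex. -/
structure ConeOrder (K : DeltaComplex F n) where
  pos : CCell K.Cell → ℕ
  inj : Function.Injective pos
  base_lt_base : ∀ σ τ : K.Cell, K.tmin σ < K.tmin τ → pos (.base σ) < pos (.base τ)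
  base_lt_omega : ∀ σ : K.Cell, pos (.base σ) < pos .omega
  omega_lt_cone : ∀ σ : K.Cell, pos .omega < pos (.cone σ)
  cone_lt_cone : ∀ σ τ : K.Cell, K.tmax τ < K.tmax σ → pos (.cone σ) < pos (.cone τ)
  faces_first : ∀ x y, (ccellBd K x) y ≠ 0 → pos y < pos x

/-- `σ` is the pivot (lowest nonzero entry) of the column (chain) `c`. -/
def IsLow (K : DeltaComplex F n) (O : ConeOrder K) (c : CCell K.Cell →₀ F)
    (σ : CCell K.Cell) : Prop :=
  c σ ≠ 0 ∧ ∀ ρ, c ρ ≠ 0 → O.pos ρ ≤ O.pos σ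

/-- `R = DV` is a decomposition of the boundary matrix `D` of the cone filtration:
`V` is invertible upper-triangular and `R` is reduced (pivots of nonzero columns lie
in pairwise distinct rows). -/
structure IsReduction (K : DeltaComplex F n) (O : ConeOrder K)
    (R V : CCell K.Cell → (CCell K.Cell →₀ F)) : Prop where
  rdv : ∀ τ, R τ = cbd K (V τ)
  upper : ∀ τ ρ, (V τ) ρ ≠ 0 → O.pos ρ ≤ O.pos τ
  diag : ∀ τ, (V τ) τ ≠ 0
  reduced : ∀ τ τ' σ, τ ≠ τ' → IsLow K O (R τ) σ → ¬ IsLow K O (R τ') σ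

/-- One run of the lazy (standard left-to-right) reduction of the column of `τ`:
starting from a column `c` (with coefficient vector `v`), while the column is nonzero
and its pivot collides with the pivot of an earlier (already reduced) column, subtract
the appropriate scalar multiple of that column. -/
inductive LazyReduces (K : DeltaComplex F n) (O : ConeOrder K)
    (R V : CCell K.Cell → (CCell K.Cell →₀ F)) (τ : CCell K.Cell) :
    (CCell K.Cell →₀ F) → (CCell K.Cell →₀ F) →
      (CCell K.Cell →₀ F) → (CCell K.Cell →₀ F) → Prop
  | done (c v : CCell K.Cell →₀ F)
      (h : ∀ σ, IsLow K O c σ → ∀ τ', O.pos τ' < O.pos τ → ¬ IsLow K O (R τ') σ) :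
      LazyReduces K O R V τ c v c v
  | step (c v c' v' : CCell K.Cell →₀ F) (τ' σ : CCell K.Cell)
      (hlt : O.pos τ' < O.pos τ) (hc : IsLow K O c σ) (hr : IsLow K O (R τ') σ)
      (next : LazyReduces K O R V τ (c - (c σ / ((R τ') σ)) • R τ')
        (v - (c σ / ((R τ') σ)) • V τ') c' v') :
      LazyReduces K O R V τ c v c' v'

/-- `R = DV` is obtained by the lazy reduction: every column `R τ` (with coefficient
column `V τ`) is the result of the lazy reduction of the boundary column of `τ`,
columns being processed from left to right. -/
def IsLazyReduction (K : DeltaComplex F n) (O : ConeOrder K)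
    (R V : CCell K.Cell → (CCell K.Cell →₀ F)) : Prop :=
  ∀ τ, LazyReduces K O R V τ (ccellBd K τ) (Finsupp.single τ 1) (R τ) (V τ)

section Helpers
variable {F : Type} [Field F] {n : ℤ} (K : DeltaComplex F n)

noncomputable def cbdHom : (CCell K.Cell →₀ F) →ₗ[F] (CCell K.Cell →₀ F) :=
  Finsupp.lsum F fun x => LinearMap.toSpanSingleton F _ (ccellBd K x)

lemma cbd_eq (c : CCell K.Cell →₀ F) : cbd K c = cbdHom K c := rfl

noncomputable def bdHom : (K.Cell →₀ F) →ₗ[F] (K.Cell →₀ F) :=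
  Finsupp.lsum F fun x => LinearMap.toSpanSingleton F _ (K.bdry x)

lemma cbdHom_single (x : CCell K.Cell) (a : F) :
    cbdHom K (Finsupp.single x a) = a • ccellBd K x := by
  simp [cbdHom]

lemma bdHom_single (x : K.Cell) (a : F) :
    bdHom K (Finsupp.single x a) = a • K.bdry x := by
  simp [bdHom]

lemma ccellBd_base (ρ : K.Cell) :
    ccellBd K (CCell.base ρ) = Finsupp.mapDomain CCell.base (K.bdry ρ) := rfl

lemma bd_bdry (ρ : K.Cell) : bdHom K (K.bdry ρ) = 0 := by
  have : bdHom K (K.bdry ρ) = (K.bdry ρ).sum fun σ a => a • K.bdry σ := rfl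
  rw [this, K.bdry_bdry]

/-- commutation: cbd ∘ mapDomain base = mapDomain base ∘ bd -/
lemma comm_base :
    (cbdHom K) ∘ₗ (Finsupp.lmapDomain F F (CCell.base (C := K.Cell)))
      = (Finsupp.lmapDomain F F CCell.base) ∘ₗ (bdHom K) := by
  apply Finsupp.lhom_ext
  intro ρ a
  simp [Finsupp.lmapDomain_apply, Finsupp.mapDomain_single, cbdHom_single,
    bdHom_single, ccellBd_base, Finsupp.mapDomain_smul]

lemma dd_single_base (ρ : K.Cell) (a : F) :
    cbdHom K (cbdHom K (Finsupp.single (CCell.base ρ) a)) = 0 := by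
  have h1 : cbdHom K (Finsupp.single (CCell.base ρ) a)
      = Finsupp.lmapDomain F F CCell.base (a • K.bdry ρ) := by
    rw [cbdHom_single, ccellBd_base, map_smul]
    simp [Finsupp.lmapDomain_apply]
  rw [h1]
  have := congrFun (congrArg (fun f => f.toFun) (comm_base K)) (a • K.bdry ρ)
  rw [show (cbdHom K) ((Finsupp.lmapDomain F F CCell.base) (a • K.bdry ρ))
      = (Finsupp.lmapDomain F F CCell.base) ((bdHom K) (a • K.bdry ρ)) from this]
  rw [map_smul, bd_bdry]
  simp

end Helpers
section Helpers2
variable {F : Type} [Field F] {n : ℤ} (K : DeltaComplex F n)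

/-- the `ω`-coefficient map -/
noncomputable def Tmap : (K.Cell →₀ F) →ₗ[F] (CCell K.Cell →₀ F) :=
  Finsupp.lsum F fun ρ => LinearMap.toSpanSingleton F _
    (if K.dim ρ = 0 then Finsupp.single CCell.omega (1:F) else 0)

lemma ccellBd_cone (ρ : K.Cell) :
    ccellBd K (CCell.cone ρ) = Finsupp.single (CCell.base ρ) 1
      - Finsupp.mapDomain CCell.cone (K.bdry ρ)
      - (if K.dim ρ = 0 then Finsupp.single CCell.omega 1 else 0) := rfl

lemma comm_cone :
    (cbdHom K) ∘ₗ (Finsupp.lmapDomain F F (CCell.cone (C := K.Cell)))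
      = (Finsupp.lmapDomain F F CCell.base)
        - (Finsupp.lmapDomain F F CCell.cone) ∘ₗ (bdHom K) - Tmap K := by
  apply Finsupp.lhom_ext
  intro ρ a
  simp only [LinearMap.coe_comp, Function.comp_apply, Finsupp.lmapDomain_apply,
    Finsupp.mapDomain_single, cbdHom_single, bdHom_single, LinearMap.sub_apply,
    ccellBd_cone, Tmap, Finsupp.lsum_single, LinearMap.toSpanSingleton_apply,
    map_smul]
  rw [smul_sub, smul_sub, Finsupp.smul_single, smul_eq_mul, mul_one]

lemma dd_single_cone (ρ : K.Cell) (a : F) :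
    cbdHom K (cbdHom K (Finsupp.single (CCell.cone ρ) a)) = a • Tmap K (K.bdry ρ) := by
  have h1 : cbdHom K (Finsupp.single (CCell.cone ρ) a)
      = a • (Finsupp.single (CCell.base ρ) 1
        - Finsupp.lmapDomain F F CCell.cone (K.bdry ρ)
        - (if K.dim ρ = 0 then Finsupp.single CCell.omega 1 else 0)) := by
    rw [cbdHom_single, ccellBd_cone]; rfl
  rw [h1, map_smul, map_sub, map_sub]
  have h2 : cbdHom K ((Finsupp.lmapDomain F F CCell.cone) (K.bdry ρ))
      = (Finsupp.lmapDomain F F CCell.base) (K.bdry ρ)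
        - (Finsupp.lmapDomain F F CCell.cone) (bdHom K (K.bdry ρ)) - Tmap K (K.bdry ρ) := by
    have := congrFun (congrArg (fun f => f.toFun) (comm_cone K)) (K.bdry ρ)
    simpa using this
  have h3 : cbdHom K (Finsupp.single (CCell.base ρ) (1:F))
      = (Finsupp.lmapDomain F F CCell.base) (K.bdry ρ) := by
    rw [cbdHom_single, ccellBd_base, one_smul]; rfl
  have h4 : cbdHom K (if K.dim ρ = 0 then Finsupp.single CCell.omega (1:F) else 0) = 0 := by
    split
    · rw [cbdHom_single]; show (1:F) • ccellBd K CCell.omega = 0; simp [ccellBd]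
    · simp
  rw [h2, h3, h4, bd_bdry]
  simp

lemma Tmap_supp (u : K.Cell →₀ F) (x : CCell K.Cell) (h : Tmap K u x ≠ 0) :
    x = CCell.omega := by
  by_contra hx
  apply h
  rw [Tmap]
  simp only [Finsupp.lsum_apply]
  rw [Finsupp.sum_apply, Finsupp.sum]
  apply Finset.sum_eq_zero
  intro ρ' _
  rw [LinearMap.toSpanSingleton_apply]
  split
  · rw [Finsupp.smul_single, Finsupp.single_apply, if_neg (fun hh : CCell.omega = x => hx hh.symm)]

  · simp

end Helpers2
section Helpers3
variable {F : Type} [Field F] {n : ℤ} (K : DeltaComplex F n)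

lemma sum_apply_ne {α β : Type} (u : α →₀ F) (f : α → F → (β →₀ F)) (x : β)
    (h : (u.sum f) x ≠ 0) : ∃ y, u y ≠ 0 ∧ f y (u y) x ≠ 0 := by
  rw [Finsupp.sum_apply, Finsupp.sum] at h
  obtain ⟨y, hy, hne⟩ := Finset.exists_ne_zero_of_sum_ne_zero h
  exact ⟨y, Finsupp.mem_support_iff.mp hy, hne⟩

lemma cbd_apply_ne (u : CCell K.Cell →₀ F) (x : CCell K.Cell)
    (h : cbd K u x ≠ 0) : ∃ y, u y ≠ 0 ∧ ccellBd K y x ≠ 0 := by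
  obtain ⟨y, hy, hne⟩ := sum_apply_ne u (fun y a => a • ccellBd K y) x h
  refine ⟨y, hy, fun hz => hne ?_⟩
  rw [Finsupp.smul_apply, hz, smul_zero]

lemma base_inj : Function.Injective (CCell.base (C := K.Cell)) := by
  intro a b h; cases h; rfl

lemma ccellBd_base_supp (ρ : K.Cell) (x : CCell K.Cell)
    (h : ccellBd K (CCell.base ρ) x ≠ 0) :
    ∃ ρ', x = CCell.base ρ' ∧ K.bdry ρ ρ' ≠ 0 := by
  rw [ccellBd_base] at h
  cases x with
  | base ρ' =>
      exact ⟨ρ', rfl, by rwa [Finsupp.mapDomain_apply (base_inj K)] at h⟩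
  | omega => exact absurd (Finsupp.mapDomain_notin_range _ _ (by rintro ⟨a, ⟨⟩⟩)) h
  | cone ρ' => exact absurd (Finsupp.mapDomain_notin_range _ _ (by rintro ⟨a, ⟨⟩⟩)) h

lemma ccellBd_cone_apply_base (ρ ρ' : K.Cell) :
    ccellBd K (CCell.cone ρ) (CCell.base ρ') = if ρ = ρ' then 1 else 0 := by
  rw [ccellBd_cone, Finsupp.sub_apply, Finsupp.sub_apply,
    Finsupp.mapDomain_notin_range _ _ (show CCell.base ρ' ∉ Set.range CCell.cone by rintro ⟨a, ⟨⟩⟩),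
    Finsupp.single_apply]
  have h2 : (if K.dim ρ = 0 then Finsupp.single CCell.omega (1:F) else 0) (CCell.base ρ') = 0 := by
    split <;> simp [Finsupp.single_apply]
  rw [h2]
  simp only [CCell.base.injEq, sub_zero]

lemma conePart_base (c : CCell K.Cell →₀ F) (ρ : K.Cell) :
    conePart K c (CCell.base ρ) = 0 := by
  rw [conePart, Finsupp.sum_apply, Finsupp.sum]
  apply Finset.sum_eq_zero
  intro y _
  cases y with
  | base ρ' => simp
  | omega => simp [Finsupp.single_apply]
  | cone ρ' => simp [Finsupp.single_apply]

lemma conePart_omega (c : CCell K.Cell →₀ F) :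
    conePart K c CCell.omega = c CCell.omega := by
  conv_rhs => rw [← Finsupp.sum_single c]
  rw [conePart, Finsupp.sum_apply, Finsupp.sum_apply, Finsupp.sum, Finsupp.sum]
  apply Finset.sum_congr rfl
  intro y _
  cases y with
  | base ρ' => simp [Finsupp.single_apply]
  | omega => rfl
  | cone ρ' => rfl

lemma conePart_cone (c : CCell K.Cell →₀ F) (ρ : K.Cell) :
    conePart K c (CCell.cone ρ) = c (CCell.cone ρ) := by
  conv_rhs => rw [← Finsupp.sum_single c]
  rw [conePart, Finsupp.sum_apply, Finsupp.sum_apply, Finsupp.sum, Finsupp.sum]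
  apply Finset.sum_congr rfl
  intro y _
  cases y with
  | base ρ' => simp [Finsupp.single_apply]
  | omega => rfl
  | cone ρ' => rfl

lemma dd_base_only (u : CCell K.Cell →₀ F)
    (h : ∀ x, u x ≠ 0 → ∃ ρ, x = CCell.base ρ) :
    cbdHom K (cbdHom K u) = 0 := by
  conv_lhs => rw [← Finsupp.sum_single u, map_finsuppSum, map_finsuppSum]
  rw [Finsupp.sum]
  apply Finset.sum_eq_zero
  intro y hy
  obtain ⟨ρ, rfl⟩ := h y (Finsupp.mem_support_iff.mp hy)
  exact dd_single_base K ρ _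

lemma dd_supp (u : CCell K.Cell →₀ F) (x : CCell K.Cell)
    (h : cbdHom K (cbdHom K u) x ≠ 0) : x = CCell.omega := by
  rw [← Finsupp.sum_single u, map_finsuppSum, map_finsuppSum] at h
  obtain ⟨y, _, hne⟩ := sum_apply_ne u (fun y a => cbdHom K (cbdHom K (Finsupp.single y a))) x h
  cases y with
  | base ρ => rw [dd_single_base] at hne; simp at hne
  | omega =>
      rw [cbdHom_single] at hne
      have : ccellBd K (CCell.omega (C := K.Cell)) = 0 := rfl
      rw [this, smul_zero, map_zero] at hne
      simp at hne
  | cone ρ =>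
      rw [dd_single_cone] at hne
      refine Tmap_supp K (K.bdry ρ) x (fun hz => hne ?_)
      rw [Finsupp.smul_apply, hz, smul_zero]

end Helpers3
/-- Claim (extended open-open structure): let `(σ,τ̄)` be a persistence pair pairing a base
simplex `σ` with a cone simplex `τ̄ = ω∗τ`, with `min σ = d > b = max τ` (`low R[τ̄] = σ`),
and let `c = V[τ̄] ∩ (K̄ − K) + V[τ̄] ∩ K_{≥b}` and `z = ∂c`. Then `z` is a cycle supported
on `K[b,d] = K_{≥b} ∩ K_{≤d}`, and both `σ` and `τ` have nonzero coefficients in `z`. -/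
theorem statement_16 {F : Type} [Field F] {n : ℤ} (K : DeltaComplex F n) (O : ConeOrder K)
    (R V : CCell K.Cell → (CCell K.Cell →₀ F)) (hRV : IsReduction K O R V)
    (σ τ : K.Cell) (b d : ℤ) (hd : K.tmin σ = d) (hb : K.tmax τ = b) (hbd : b < d)
    (hlow : IsLow K O (R (CCell.cone τ)) (CCell.base σ)) :
    SuppOn (cbd K (conePart K (V (CCell.cone τ))
          + (V (CCell.cone τ)).filter
              (fun x => ∃ ρ : K.Cell, x = CCell.base ρ ∧ b ≤ K.tmax ρ)))
        (fun x => ∃ ρ : K.Cell, x = CCell.base ρ ∧ b ≤ K.tmax ρ ∧ K.tmin ρ ≤ d)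
    ∧ cbd K (cbd K (conePart K (V (CCell.cone τ))
          + (V (CCell.cone τ)).filter
              (fun x => ∃ ρ : K.Cell, x = CCell.base ρ ∧ b ≤ K.tmax ρ))) = 0
    ∧ (cbd K (conePart K (V (CCell.cone τ))
          + (V (CCell.cone τ)).filter
              (fun x => ∃ ρ : K.Cell, x = CCell.base ρ ∧ b ≤ K.tmax ρ)))
        (CCell.base σ) ≠ 0
    ∧ (cbd K (conePart K (V (CCell.cone τ))
          + (V (CCell.cone τ)).filter
              (fun x => ∃ ρ : K.Cell, x = CCell.base ρ ∧ b ≤ K.tmax ρ)))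
        (CCell.base τ) ≠ 0 := by
  classical
  obtain ⟨hlow1, hlow2⟩ := hlow
  set v : CCell K.Cell →₀ F := V (CCell.cone τ) with hvdef
  set c : CCell K.Cell →₀ F := conePart K v
      + v.filter (fun x => ∃ ρ : K.Cell, x = CCell.base ρ ∧ b ≤ K.tmax ρ) with hcdef
  set w : CCell K.Cell →₀ F :=
      v.filter (fun x => ∃ ρ : K.Cell, x = CCell.base ρ ∧ ¬ b ≤ K.tmax ρ) with hwdef
  -- support of R (cone τ)
  have hA : ∀ x, R (CCell.cone τ) x ≠ 0 → ∃ ρ, x = CCell.base ρ ∧ K.tmin ρ ≤ d := by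
    intro x hx
    have hp := hlow2 x hx
    cases x with
    | base ρ =>
        refine ⟨ρ, rfl, ?_⟩
        by_contra hcon
        push_neg at hcon
        have := O.base_lt_base σ ρ (by rw [hd]; exact hcon)
        omega
    | omega => have h1 := O.base_lt_omega σ; omega
    | cone ρ => have h1 := O.base_lt_omega σ; have h2 := O.omega_lt_cone ρ; omega
  -- cone entries of v have tmax ≥ b
  have hB : ∀ ρ, v (CCell.cone ρ) ≠ 0 → b ≤ K.tmax ρ := by
    intro ρ hρ
    have hup := hRV.upper (CCell.cone τ) (CCell.cone ρ) hρ
    by_contra hcon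
    push_neg at hcon
    have := O.cone_lt_cone τ ρ (by rw [hb]; exact hcon)
    omega
  -- the splitting v = c + w
  have hEkey : v = c + w := by
    rw [hcdef, hwdef]
    ext x
    simp only [Finsupp.add_apply, Finsupp.filter_apply]
    cases x with
    | base ρ =>
        rw [conePart_base]
        by_cases hge : b ≤ K.tmax ρ
        · rw [if_pos ⟨ρ, rfl, hge⟩, if_neg (by rintro ⟨ρ', heq, hcon⟩; cases base_inj K heq; exact hcon hge)]
          simp
        · rw [if_neg (by rintro ⟨ρ', heq, hcon⟩; cases base_inj K heq; exact hge hcon),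
            if_pos ⟨ρ, rfl, hge⟩]
          simp
    | omega =>
        rw [conePart_omega, if_neg (by rintro ⟨ρ', ⟨⟩, -⟩), if_neg (by rintro ⟨ρ', ⟨⟩, -⟩)]
        simp
    | cone ρ =>
        rw [conePart_cone, if_neg (by rintro ⟨ρ', ⟨⟩, -⟩), if_neg (by rintro ⟨ρ', ⟨⟩, -⟩)]
        simp
  have hRz : R (CCell.cone τ) = cbd K c + cbd K w := by
    rw [hRV.rdv (CCell.cone τ), ← hvdef, hEkey, cbd_eq, map_add, ← cbd_eq, ← cbd_eq]
  have hsplit : cbd K c = cbd K (conePart K v)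
      + cbd K (v.filter (fun x => ∃ ρ : K.Cell, x = CCell.base ρ ∧ b ≤ K.tmax ρ)) := by
    rw [hcdef, cbd_eq, map_add, ← cbd_eq, ← cbd_eq]
  -- evaluation of the cone part boundary on base cells
  have hConeval : ∀ ρ', (cbd K (conePart K v)) (CCell.base ρ') = v (CCell.cone ρ') := by
    intro ρ'
    rw [← conePart_cone K v ρ']
    conv_rhs => rw [← Finsupp.sum_single (conePart K v)]
    rw [cbd, Finsupp.sum_apply, Finsupp.sum_apply, Finsupp.sum, Finsupp.sum]
    apply Finset.sum_congr rfl
    intro y hy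
    cases y with
    | base ρ0 => exact absurd (conePart_base K v ρ0) (Finsupp.mem_support_iff.mp hy)
    | omega =>
        have h0 : ccellBd K (CCell.omega (C := K.Cell)) = 0 := rfl
        rw [h0, smul_zero, Finsupp.single_apply, if_neg (by rintro ⟨⟩)]
        rfl
    | cone ρ0 =>
        rw [Finsupp.smul_apply, ccellBd_cone_apply_base, Finsupp.single_apply]
        by_cases h : ρ0 = ρ'
        · subst h; simp
        · rw [if_neg h, if_neg (by simpa using h), smul_zero]
  -- support of the boundary of the ≥ b part
  have hGesupp : ∀ x, cbd K (v.filter (fun x => ∃ ρ : K.Cell, x = CCell.base ρ ∧ b ≤ K.tmax ρ)) x ≠ 0 →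
      ∃ ρ', x = CCell.base ρ' ∧ b ≤ K.tmax ρ' ∧ ∃ ρ0, K.bdry ρ0 ρ' ≠ 0 ∧ b ≤ K.tmax ρ0 := by
    intro x hx
    obtain ⟨y, hy, hcc⟩ := cbd_apply_ne K _ _ hx
    rw [Finsupp.filter_apply] at hy
    by_cases hp : ∃ ρ : K.Cell, y = CCell.base ρ ∧ b ≤ K.tmax ρ
    · obtain ⟨ρ0, rfl, hge⟩ := hp
      obtain ⟨ρ', rfl, hbne⟩ := ccellBd_base_supp K ρ0 x hcc
      have := (K.nest ρ0 ρ' hbne).2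
      exact ⟨ρ', rfl, by omega, ρ0, hbne, hge⟩
    · rw [if_neg hp] at hy; exact absurd rfl hy
  -- support of the boundary of the < b part
  have hLtsupp : ∀ x, cbd K w x ≠ 0 → ∃ ρ', x = CCell.base ρ' ∧ K.tmin ρ' < b := by
    intro x hx
    obtain ⟨y, hy, hcc⟩ := cbd_apply_ne K _ _ hx
    rw [hwdef, Finsupp.filter_apply] at hy
    by_cases hp : ∃ ρ : K.Cell, y = CCell.base ρ ∧ ¬ b ≤ K.tmax ρ
    · obtain ⟨ρ0, rfl, hlt⟩ := hp
      obtain ⟨ρ', rfl, hbne⟩ := ccellBd_base_supp K ρ0 x hcc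
      have h1 := (K.nest ρ0 ρ' hbne).1
      have h2 := K.tmin_lt_tmax ρ0
      exact ⟨ρ', rfl, by omega⟩
    · rw [if_neg hp] at hy; exact absurd rfl hy
  -- claim 3 : coefficient of σ
  have hLtσ : cbd K w (CCell.base σ) = 0 := by
    by_contra h
    obtain ⟨ρ', heq, hlt⟩ := hLtsupp _ h
    cases base_inj K heq
    omega
  have hzσ : cbd K c (CCell.base σ) ≠ 0 := by
    have := congrArg (fun f : CCell K.Cell →₀ F => f (CCell.base σ)) hRz
    simp only [Finsupp.add_apply, hLtσ, add_zero] at this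
    rw [← this]
    exact hlow1
  -- claim 4 : coefficient of τ
  have hGeτ : cbd K (v.filter (fun x => ∃ ρ : K.Cell, x = CCell.base ρ ∧ b ≤ K.tmax ρ))
      (CCell.base τ) = 0 := by
    by_contra h
    obtain ⟨ρ', heq, -, ρ0, hbne, hge⟩ := hGesupp _ h
    cases base_inj K heq
    have := (K.nest ρ0 τ hbne).2
    omega
  have hzτ : cbd K c (CCell.base τ) ≠ 0 := by
    have := congrArg (fun f : CCell K.Cell →₀ F => f (CCell.base τ)) hsplit
    simp only [Finsupp.add_apply, hGeτ, add_zero] at this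
    rw [this, hConeval τ]
    exact hRV.diag (CCell.cone τ)
  -- claim 1 : support
  have hsupp : SuppOn (cbd K c)
      (fun x => ∃ ρ : K.Cell, x = CCell.base ρ ∧ b ≤ K.tmax ρ ∧ K.tmin ρ ≤ d) := by
    intro x hx
    have hx2 : R (CCell.cone τ) x ≠ 0 ∨ cbd K w x ≠ 0 := by
      by_contra hcon
      push_neg at hcon
      apply hx
      have := congrArg (fun f : CCell K.Cell →₀ F => f x) hRz
      simp only [Finsupp.add_apply, hcon.1, hcon.2, add_zero] at this
      exact this.symm
    obtain ⟨ρ, rfl, hmin⟩ : ∃ ρ, x = CCell.base ρ ∧ K.tmin ρ ≤ d := by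
      rcases hx2 with h | h
      · exact hA x h
      · obtain ⟨ρ', rfl, hlt⟩ := hLtsupp x h
        exact ⟨ρ', rfl, by omega⟩
    have hx1 : (cbd K (conePart K v)) (CCell.base ρ) ≠ 0
        ∨ cbd K (v.filter (fun x => ∃ ρ : K.Cell, x = CCell.base ρ ∧ b ≤ K.tmax ρ))
            (CCell.base ρ) ≠ 0 := by
      by_contra hcon
      push_neg at hcon
      apply hx
      have := congrArg (fun f : CCell K.Cell →₀ F => f (CCell.base ρ)) hsplit
      simp only [Finsupp.add_apply, hcon.1, hcon.2, add_zero] at this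
      exact this
    have hmax : b ≤ K.tmax ρ := by
      rcases hx1 with h | h
      · rw [hConeval ρ] at h
        exact hB ρ h
      · obtain ⟨ρ', heq, hge, -⟩ := hGesupp _ h
        cases base_inj K heq
        exact hge
    exact ⟨ρ, rfl, hmax, hmin⟩
  -- claim 2 : z is a cycle
  have hddw : cbdHom K (cbdHom K w) = 0 := by
    apply dd_base_only
    intro x hx
    rw [hwdef, Finsupp.filter_apply] at hx
    by_cases hp : ∃ ρ : K.Cell, x = CCell.base ρ ∧ ¬ b ≤ K.tmax ρ
    · obtain ⟨ρ, rfl, -⟩ := hp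
      exact ⟨ρ, rfl⟩
    · rw [if_neg hp] at hx
      exact absurd rfl hx
  have hddc : cbdHom K (cbdHom K c) = cbdHom K (cbdHom K v) := by
    have e1 : cbdHom K (c + w) = cbdHom K c + cbdHom K w := map_add _ c w
    have e2 : cbdHom K (cbdHom K c + cbdHom K w)
        = cbdHom K (cbdHom K c) + cbdHom K (cbdHom K w) := map_add _ _ _
    rw [hEkey, e1, e2, hddw, add_zero]
  have hclaim2 : cbd K (cbd K c) = 0 := by
    ext x
    rw [Finsupp.coe_zero, Pi.zero_apply]
    by_cases hx : x = CCell.omega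
    · subst hx
      rw [cbd, Finsupp.sum_apply, Finsupp.sum]
      apply Finset.sum_eq_zero
      intro y hy
      obtain ⟨ρ, rfl, -, -⟩ := hsupp y (Finsupp.mem_support_iff.mp hy)
      rw [Finsupp.smul_apply, ccellBd_base,
        Finsupp.mapDomain_notin_range _ _ (show (CCell.omega : CCell K.Cell) ∉ Set.range CCell.base by rintro ⟨a, ⟨⟩⟩),
        smul_zero]
    · by_contra h
      have h' : cbdHom K (cbdHom K v) x ≠ 0 := by
        rw [← hddc]
        exact h
      exact hx (dd_supp K v x h')
  exact ⟨hsupp, hclaim2, hzσ, hzτ⟩
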